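/- Sup-translation property: Let Y be a real vector space, L ⊆ Y a non-degenerate proper convex cone, Λ : [0,∞) → L normal modulo L, and γ the gauge function attached to (L,Λ). Then γ(y + Λ(t)) ≥ γ(y) + t for every y ∈ Y and every t ∈ [0,∞) (in the extended reals, with the convention −∞ + t = −∞). -/

import Mathlib

/-! If `Λ s ≤_L y`, then subadditivity gives `Λ (s + t) ≤_L Λ s + Λ t ≤_L y + Λ t`, so every
admissible `s` for `y` yields the admissible `s + t` for `y + Λ t`. -/

/-- The gauge function attached to `(L, Λ)`. -/
noncomputable def conicalGauge {Y : Type*} [AddCommGroup Y] [Module ℝ Y]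
    (L : Set Y) (Λ : ℝ → Y) (y : Y) : EReal :=
  sSup ((fun s : ℝ => (s : EReal)) '' {s : ℝ | 0 ≤ s ∧ y - Λ s ∈ L})

lemma add_sub_mem_of_sub_mem_of_add_sub_mem {G : Type*} [AddCommGroup G] {L : Set G}
    (hadd : ∀ x ∈ L, ∀ y ∈ L, x + y ∈ L) {x a b c : G}
    (hxa : x - a ∈ L) (habc : a + b - c ∈ L) : x + b - c ∈ L := by
  have h := hadd _ hxa _ habc
  rwa [show x - a + (a + b - c) = x + b - c by abel] at h

section ConicalGauge

variable {Y : Type*} [AddCommGroup Y] [Module ℝ Y] {L : Set Y} {Λ : ℝ → Y}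

lemma add_mem_of_cone
    (hcone : ∀ a b : ℝ, 0 ≤ a → 0 ≤ b → ∀ x ∈ L, ∀ y ∈ L, a • x + b • y ∈ L)
    {x y : Y} (hx : x ∈ L) (hy : y ∈ L) : x + y ∈ L := by
  simpa using hcone 1 1 zero_le_one zero_le_one x hx y hy

lemma le_conicalGauge {y : Y} {s : ℝ} (hs : 0 ≤ s) (hy : y - Λ s ∈ L) :
    (s : EReal) ≤ conicalGauge L Λ y :=
  le_sSup ⟨s, ⟨hs, hy⟩, rfl⟩

lemma conicalGauge_add_le {y y' : Y} {t : ℝ} (ht : 0 ≤ t)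
    (h : ∀ s : ℝ, 0 ≤ s → y - Λ s ∈ L → y' - Λ (s + t) ∈ L) :
    conicalGauge L Λ y + (t : EReal) ≤ conicalGauge L Λ y' := by
  have ht_bot : (t : EReal) ≠ ⊥ := EReal.coe_ne_bot t
  have ht_top : (t : EReal) ≠ ⊤ := EReal.coe_ne_top t
  rw [← EReal.le_sub_iff_add_le (.inl ht_bot) (.inl ht_top)]
  refine sSup_le ?_
  rintro _ ⟨s, ⟨hs, hsy⟩, rfl⟩
  rw [EReal.le_sub_iff_add_le (.inl ht_bot) (.inl ht_top), ← EReal.coe_add]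
  exact le_conicalGauge (add_nonneg hs ht) (h s hs hsy)

end ConicalGauge

theorem gauge_sup_translation_general {Y : Type*} [AddCommGroup Y] [Module ℝ Y]
    (L : Set Y)
    (hcone : ∀ a b : ℝ, 0 ≤ a → 0 ≤ b → ∀ x ∈ L, ∀ y ∈ L, a • x + b • y ∈ L)
    (Λ : ℝ → Y)
    (hsub : ∀ t₁ t₂ : ℝ, 0 ≤ t₁ → 0 ≤ t₂ → (Λ t₁ + Λ t₂) - Λ (t₁ + t₂) ∈ L) :
    ∀ y : Y, ∀ t : ℝ, 0 ≤ t →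
      conicalGauge L Λ y + (t : EReal) ≤ conicalGauge L Λ (y + Λ t) := by
  intro y t ht
  refine conicalGauge_add_le ht fun s hs hsy => ?_
  exact add_sub_mem_of_sub_mem_of_add_sub_mem (fun x hx z hz => add_mem_of_cone hcone hx hz)
    hsy (hsub s t hs ht)

/-- Sup-translation property of the gauge function:
`γ(y + Λ(t)) ≥ γ(y) + t`. -/
theorem gauge_sup_translation {Y : Type*} [AddCommGroup Y] [Module ℝ Y]
    (L : Set Y)
    (hcone : ∀ a b : ℝ, 0 ≤ a → 0 ≤ b → ∀ x ∈ L, ∀ y ∈ L, a • x + b • y ∈ L)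
    (hnd : L ≠ {0}) (hproper : L ≠ Set.univ)
    (Λ : ℝ → Y) (hmem : ∀ t : ℝ, 0 ≤ t → Λ t ∈ L)
    (h0 : Λ 0 = 0)
    (hstrict : ∀ t τ : ℝ, 0 ≤ t → t < τ → Λ τ - Λ t ∈ L \ (-L))
    (hsub : ∀ t₁ t₂ : ℝ, 0 ≤ t₁ → 0 ≤ t₂ → (Λ t₁ + Λ t₂) - Λ (t₁ + t₂) ∈ L) :
    ∀ y : Y, ∀ t : ℝ, 0 ≤ t →
      conicalGauge L Λ y + (t : EReal) ≤ conicalGauge L Λ (y + Λ t) :=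
  gauge_sup_translation_general L hcone Λ hsub
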